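/- Fix an outcome p ∈ Δ_π(A×Θ). For each player i let 𝒜^p_i be the partition of A_i whose cells group positive-probability actions with identical conditional beliefs (and put all zero-probability actions in one cell). Then for all action profiles a and states θ, p(a,θ) = [∏_i σ_i(a_i | 𝒜^p_i(a_i))] · Σ_{b ∈ 𝒜^p(a)} p(b,θ), where σ_i(a_i | B_i) = p(a_i)/Σ_{b_i ∈ B_i} p(b_i) if a_i ∈ B_i ∩ supp_i(p), σ_i(a_i | B_i) = 1/(|A_i|−|supp_i(p)|) if a_i ∈ B_i \ supp_i(p), and 0 otherwise, and 𝒜^p(a) = ∏_i 𝒜^p_i(a_i). -/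
import Mathlib


open Finset

variable {I : Type} [Fintype I] [DecidableEq I]
  {A : I → Type} [∀ i, Fintype (A i)] [∀ i, DecidableEq (A i)]
  {Θ : Type} [Fintype Θ]

/-- The marginal probability that player `i` plays `ai` under outcome `p`. -/
noncomputable def marg (p : ((∀ j, A j) × Θ) → ℝ) (i : I) (ai : A i) : ℝ :=
  ∑ x : (∀ j, A j) × Θ, if x.1 i = ai then p x else 0

/-- The conditional belief of player `i` given recommendation `ai`, represented
as a function on full profile-state pairs that ignores the `i`-th coordinate
(it is overridden by `ai`).  It is the zero function if `marg p i ai = 0`. -/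
noncomputable def condBelief (p : ((∀ j, A j) × Θ) → ℝ) (i : I) (ai : A i) :
    ((∀ j, A j) × Θ) → ℝ :=
  fun x => p (Function.update x.1 i ai, x.2) / marg p i ai

/-- Expected utility for player `i` of playing `ci` against belief `μ`. -/
noncomputable def dev (u : ((∀ j, A j) × Θ) → ℝ) (i : I) (ci : A i)
    (μ : ((∀ j, A j) × Θ) → ℝ) : ℝ :=
  ∑ x : (∀ j, A j) × Θ, u (Function.update x.1 i ci, x.2) * μ x

/-- Best responses of player `i` (with utility `u`) to belief `μ`. -/
noncomputable def BRset (u : ((∀ j, A j) × Θ) → ℝ) (i : I)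
    (μ : ((∀ j, A j) × Θ) → ℝ) : Set (A i) :=
  {ci | ∀ di : A i, dev u i di μ ≤ dev u i ci μ}

/-- The obedience constraint defining a Bayes correlated equilibrium. -/
def Obedient (u : ∀ i : I, ((∀ j, A j) × Θ) → ℝ) (p : ((∀ j, A j) × Θ) → ℝ) : Prop :=
  ∀ i : I, ∀ ai bi : A i,
    0 ≤ ∑ x : (∀ j, A j) × Θ,
      (if x.1 i = ai then (u i x - u i (Function.update x.1 i bi, x.2)) * p x else 0)

/-- The separation constraint: recommendations inducing distinct beliefs have
disjoint best-response sets. -/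
def Separated (u : ∀ i : I, ((∀ j, A j) × Θ) → ℝ) (p : ((∀ j, A j) × Θ) → ℝ) : Prop :=
  ∀ i : I, ∀ ai bi : A i, 0 < marg p i ai → 0 < marg p i bi →
    condBelief p i ai ≠ condBelief p i bi →
    BRset (u i) i (condBelief p i ai) ∩ BRset (u i) i (condBelief p i bi) = ∅

/-- `p` is an outcome with `Θ`-marginal `π`. -/
def IsOutcome (π : Θ → ℝ) (p : ((∀ j, A j) × Θ) → ℝ) : Prop :=
  (∀ x, 0 ≤ p x) ∧ ∀ θ, (∑ a : ∀ j, A j, p (a, θ)) = π θ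

open scoped Classical in
/-- The cell of the partition `𝒜^p_i` containing `ai`: positive-probability
actions with the same conditional belief as `ai` (if `ai` has positive
probability), and all zero-probability actions otherwise. -/
noncomputable def cell (p : ((∀ j, A j) × Θ) → ℝ) (i : I) (ai : A i) :
    Finset (A i) :=
  if 0 < marg p i ai then
    univ.filter fun bi => 0 < marg p i bi ∧ condBelief p i bi = condBelief p i ai
  else
    univ.filter fun bi => ¬ 0 < marg p i bi

lemma marg_nonneg (p : ((∀ j, A j) × Θ) → ℝ) (hpos : ∀ x, 0 ≤ p x) (i : I) (ai : A i) :
    0 ≤ marg p i ai :=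
  Finset.sum_nonneg fun x _ => by by_cases h : x.1 i = ai <;> simp [h, hpos]

lemma p_le_marg (p : ((∀ j, A j) × Θ) → ℝ) (hpos : ∀ x, 0 ≤ p x) (i : I)
    (b : ∀ j, A j) (θ : Θ) : p (b, θ) ≤ marg p i (b i) := by
  have := Finset.single_le_sum
    (f := fun x : (∀ j, A j) × Θ => if x.1 i = b i then p x else 0)
    (fun x _ => by by_cases h : x.1 i = b i <;> simp [h, hpos]) (Finset.mem_univ (b, θ))
  simpa [marg] using this

lemma p_eq_zero (p : ((∀ j, A j) × Θ) → ℝ) (hpos : ∀ x, 0 ≤ p x) (i : I)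
    (b : ∀ j, A j) (θ : Θ) (h : ¬ 0 < marg p i (b i)) : p (b, θ) = 0 := by
  have h0 : marg p i (b i) = 0 :=
    le_antisymm (not_lt.mp h) (marg_nonneg p hpos i (b i))
  have := p_le_marg p hpos i b θ
  linarith [hpos (b, θ)]

lemma transfer (p : ((∀ j, A j) × Θ) → ℝ) (i : I) (ai bi : A i)
    (hai : 0 < marg p i ai) (hbi : 0 < marg p i bi)
    (h : condBelief p i bi = condBelief p i ai) (x : ((∀ j, A j) × Θ)) :
    p (Function.update x.1 i bi, x.2)
      = marg p i bi / marg p i ai * p (Function.update x.1 i ai, x.2) := by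
  have h1 := congrFun h x
  simp only [condBelief] at h1
  have h2 := (div_eq_div_iff hbi.ne' hai.ne').mp h1
  field_simp
  linarith

lemma key (p : ((∀ j, A j) × Θ) → ℝ) (hpos : ∀ x, 0 ≤ p x)
    (a : ∀ j, A j) (θ : Θ) (hall : ∀ i, 0 < marg p i (a i)) (s : Finset I) :
    ∑ b ∈ univ.filter
        (fun b : ∀ j, A j => (∀ i ∈ s, b i ∈ cell p i (a i)) ∧ ∀ i ∉ s, b i = a i),
      p (b, θ)
    = (∏ i ∈ s, (∑ bi ∈ cell p i (a i), marg p i bi) / marg p i (a i)) * p (a, θ) := by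
  classical
  induction s using Finset.induction with
  | empty =>
    have hfe : (univ.filter
        (fun b : ∀ j, A j => (∀ i ∈ (∅ : Finset I), b i ∈ cell p i (a i))
          ∧ ∀ i ∉ (∅ : Finset I), b i = a i)) = {a} := by
      ext b
      simp [funext_iff]
    rw [hfe]
    simp
  | @insert j s hj ih =>
    set T := univ.filter
      (fun b : ∀ j, A j => (∀ i ∈ s, b i ∈ cell p i (a i)) ∧ ∀ i ∉ s, b i = a i) with hT
    have hbjT : ∀ b ∈ T, b j = a j := by
      intro b hb
      simp only [hT, mem_filter] at hb
      exact hb.2.2 j hj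
    have hsplit : ∑ b ∈ univ.filter
        (fun b : ∀ j, A j => (∀ i ∈ insert j s, b i ∈ cell p i (a i))
          ∧ ∀ i ∉ insert j s, b i = a i), p (b, θ)
        = ∑ x ∈ (cell p j (a j)) ×ˢ T, p (Function.update x.2 j x.1, θ) := by
      refine Finset.sum_nbij' (fun b => (b j, Function.update b j (a j)))
        (fun x => Function.update x.2 j x.1) ?_ ?_ ?_ ?_ ?_
      · intro b hb
        simp only [mem_filter, mem_univ, true_and] at hb
        simp only [mem_product]
        refine ⟨hb.1 j (mem_insert_self j s), ?_⟩
        simp only [hT, mem_filter, mem_univ, true_and]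
        constructor
        · intro i hi
          have hij : i ≠ j := fun h => hj (h ▸ hi)
          rw [Function.update_of_ne hij]
          exact hb.1 i (mem_insert_of_mem hi)
        · intro i hi
          by_cases hij : i = j
          · subst hij; simp
          · rw [Function.update_of_ne hij]
            exact hb.2 i (by simp [hij, hi])
      · intro x hx
        simp only [mem_product] at hx
        obtain ⟨hx1, hx2⟩ := hx
        simp only [hT, mem_filter, mem_univ, true_and] at hx2
        simp only [mem_filter, mem_univ, true_and]
        constructor
        · intro i hi
          rcases mem_insert.mp hi with h | h
          · subst h; simpa using hx1
          · have hij : i ≠ j := fun hh => hj (hh ▸ h)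
            rw [Function.update_of_ne hij]
            exact hx2.1 i h
        · intro i hi
          have hij : i ≠ j := fun hh => hi (hh ▸ mem_insert_self j s)
          rw [Function.update_of_ne hij]
          exact hx2.2 i (fun h => hi (mem_insert_of_mem h))
      · intro b hb
        simp [Function.update_idem, Function.update_eq_self]
      · intro x hx
        simp only [mem_product] at hx
        have h2 := hbjT x.2 hx.2
        rw [← h2]
        simp [Function.update_idem, Function.update_eq_self]
      · intro b hb
        simp [Function.update_idem, Function.update_eq_self]
    rw [hsplit, Finset.sum_product]
    have hcell : ∀ bj ∈ cell p j (a j),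
        0 < marg p j bj ∧ condBelief p j bj = condBelief p j (a j) := by
      intro bj hbj
      simp only [cell, if_pos (hall j), mem_filter] at hbj
      exact hbj.2
    have hinner : ∀ bj ∈ cell p j (a j),
        ∑ b ∈ T, p (Function.update b j bj, θ)
          = marg p j bj / marg p j (a j) * ∑ b ∈ T, p (b, θ) := by
      intro bj hbj
      obtain ⟨hbjpos, hbjcb⟩ := hcell bj hbj
      rw [Finset.mul_sum]
      refine Finset.sum_congr rfl fun b hb => ?_
      have := transfer p j (a j) bj (hall j) hbjpos hbjcb (b, θ)
      simp only at this
      rw [this]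
      congr 2
      rw [← hbjT b hb, Function.update_eq_self]
    rw [Finset.sum_congr rfl hinner, ih, Finset.prod_insert hj]
    rw [← Finset.sum_mul, ← Finset.sum_div]
    ring


open scoped Classical in
/-- the decomposition of an outcome `p` along the partitions
`𝒜^p_i`: `p(a,θ) = (∏_i σ_i(a_i | 𝒜^p_i(a_i))) · Σ_{b ∈ 𝒜^p(a)} p(b,θ)`. -/
theorem stmt11 {I : Type} [Fintype I] [DecidableEq I]
    {A : I → Type} [∀ i, Fintype (A i)] [∀ i, DecidableEq (A i)]
    {Θ : Type} [Fintype Θ]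
    (π : Θ → ℝ) (hπpos : ∀ θ, 0 < π θ) (hπ1 : ∑ θ, π θ = 1)
    (p : ((∀ j, A j) × Θ) → ℝ) (hp : IsOutcome π p) :
    ∀ (a : ∀ j, A j) (θ : Θ),
      p (a, θ) =
        (∏ i,
          (if 0 < marg p i (a i) then
            marg p i (a i) / ∑ bi ∈ cell p i (a i), marg p i bi
          else
            1 / ((Fintype.card (A i) : ℝ)
                  - ((univ.filter fun bi : A i => 0 < marg p i bi).card : ℝ))))
        * ∑ b ∈ univ.filter (fun b : ∀ j, A j => ∀ i, b i ∈ cell p i (a i)),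
            p (b, θ) := by
  classical
  intro a θ
  by_cases hall : ∀ i, 0 < marg p i (a i)
  · have hfe : univ.filter (fun b : ∀ j, A j => ∀ i, b i ∈ cell p i (a i))
        = univ.filter (fun b : ∀ j, A j =>
            (∀ i ∈ (univ : Finset I), b i ∈ cell p i (a i))
              ∧ ∀ i ∉ (univ : Finset I), b i = a i) := by
      ext b; simp
    rw [hfe, key p hp.1 a θ hall univ]
    have hS : ∀ i, 0 < ∑ bi ∈ cell p i (a i), marg p i bi := by
      intro i
      have hmem : a i ∈ cell p i (a i) := by
        simp [cell, if_pos (hall i), hall i]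
      have := Finset.single_le_sum (f := fun bi => marg p i bi)
        (fun bi _ => marg_nonneg p hp.1 i bi) hmem
      linarith [hall i]
    have hprod : (∏ i,
        (if 0 < marg p i (a i) then
          marg p i (a i) / ∑ bi ∈ cell p i (a i), marg p i bi
        else
          1 / ((Fintype.card (A i) : ℝ)
                - ((univ.filter fun bi : A i => 0 < marg p i bi).card : ℝ))))
        = ∏ i, marg p i (a i) / ∑ bi ∈ cell p i (a i), marg p i bi :=
      Finset.prod_congr rfl fun i _ => if_pos (hall i)
    rw [hprod, ← mul_assoc, ← Finset.prod_mul_distrib]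
    have hone : (∏ i, marg p i (a i) / (∑ bi ∈ cell p i (a i), marg p i bi)
        * ((∑ bi ∈ cell p i (a i), marg p i bi) / marg p i (a i))) = 1 :=
      Finset.prod_eq_one fun i _ => by
        rw [div_mul_div_comm, div_eq_one_iff_eq (mul_pos (hS i) (hall i)).ne']
        ring
    rw [hone, one_mul]
  · push_neg at hall
    obtain ⟨i0, hi0⟩ := hall
    have hi0' : ¬ 0 < marg p i0 (a i0) := not_lt.mpr hi0
    have hL : p (a, θ) = 0 := p_eq_zero p hp.1 i0 a θ hi0'
    have hR : ∑ b ∈ univ.filter (fun b : ∀ j, A j => ∀ i, b i ∈ cell p i (a i)),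
        p (b, θ) = 0 := by
      refine Finset.sum_eq_zero fun b hb => ?_
      simp only [mem_filter, mem_univ, true_and] at hb
      have := hb i0
      simp only [cell, if_neg hi0', mem_filter, mem_univ, true_and] at this
      exact p_eq_zero p hp.1 i0 b θ this
    rw [hL, hR, mul_zero]
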